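/- arXiv:1907.00876 — 4 statements merged into one kernel-verified Lean document; each statement's English description precedes it below -/
import Mathlib

section
/- Let A be a finite-dimensional real associative unital algebra and s ∈ A with s² = -1. Then the operator F_s(x) = sx + xs satisfies F_s²(F_s² + 4·Id) = 0, and consequently tr F_s = 0. -/
/-!
A real endomorphism `J` with `J² = -1` makes `V` a complex vector space on which `J` acts as
multiplication by `i`. Computing the real trace of multiplication by `c` in a basis `{b_k, i b_k}`
gives `dim_ℂ V · Tr_{ℂ/ℝ}(c)`, and `Tr_{ℂ/ℝ}(i) = 0`, so `tr J = 0`.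

Left and right multiplication by `s` are two such operators and they commute. With `X = L_s R_s`
we get `X² = L_s² R_s² = 1` and `F_s² = 2(X - 1)`, hence `F_s²(F_s² + 4) = 4(X² - 1) = 0`.
-/

open Module

theorem Commute.add_mul_self_mul_add_mul_self_add_four_eq_zero {R : Type*} [Ring R] {a b : R}
    (hab : Commute a b) (ha : a * a = -1) (hb : b * b = -1) :
    ((a + b) * (a + b)) * ((a + b) * (a + b) + 4) = 0 := by
  have hsq : (a + b) * (a + b) = 2 * (a * b) - 2 := by
    rw [add_mul, mul_add, mul_add, ha, hb, ← hab.eq]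
    grind
  have hab_sq : (a * b) * (a * b) = 1 := by
    rw [← sq, hab.mul_pow, sq, sq, ha, hb, neg_one_mul, neg_neg]
  calc ((a + b) * (a + b)) * ((a + b) * (a + b) + 4) = 4 * ((a * b) * (a * b) - 1) := by
        rw [hsq]; grind
    _ = 0 := by rw [hab_sq, sub_self, mul_zero]

theorem LinearMap.trace_distribSMul_toLinearMap {R S M : Type*} [CommRing R] [CommRing S]
    [Algebra R S] [StrongRankCondition S] [AddCommGroup M] [Module S M] [Module R M]
    [IsScalarTower R S M] [Module.Free R S] [Module.Finite R S] [Module.Free S M]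
    [Module.Finite S M] (c : S) :
    LinearMap.trace R M (DistribSMul.toLinearMap R M c) = finrank S M • Algebra.trace R S c := by
  classical
  let b := Free.chooseBasis R S
  let e := Free.chooseBasis S M
  have hdiag : ∀ i k, LinearMap.toMatrix (b.smulTower e) (b.smulTower e)
      (DistribSMul.toLinearMap R M c) (i, k) (i, k) = Algebra.leftMulMatrix b c i i := by
    intro i k
    simp [LinearMap.toMatrix_apply, Algebra.leftMulMatrix_apply, Basis.smulTower_repr, smul_smul]
  rw [LinearMap.trace_eq_matrix_trace R (b.smulTower e), Algebra.trace_eq_matrix_trace b,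
    Matrix.trace, Matrix.trace, ← Finset.univ_product_univ, Finset.sum_product_right,
    finrank_eq_card_chooseBasisIndex, ← Finset.card_univ, ← Finset.sum_const]
  simp only [Matrix.diag, hdiag]

theorem LinearMap.trace_eq_zero_of_mul_self_eq_neg_one {V : Type*} [AddCommGroup V] [Module ℝ V]
    [FiniteDimensional ℝ V] {J : Module.End ℝ V} (hJ : J * J = -1) :
    LinearMap.trace ℝ V J = 0 := by
  let φ := Complex.liftAux J hJ
  let _ : Module ℂ V := Module.compHom V φ.toRingHom
  have _ : IsScalarTower ℝ ℂ V := ⟨fun r z v => by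
    change φ (r • z) v = r • φ z v
    rw [map_smul, LinearMap.smul_apply]⟩
  have _ : Module.Finite ℂ V := .of_restrictScalars_finite ℝ ℂ V
  have hJ_eq : J = DistribSMul.toLinearMap ℝ V Complex.I := by
    ext v
    change J v = φ Complex.I v
    rw [Complex.liftAux_apply_I]
  rw [hJ_eq, LinearMap.trace_distribSMul_toLinearMap, Algebra.trace_complex_apply, Complex.I_re,
    mul_zero, smul_zero]

/-- For `s² = -1` in a finite-dimensional real associative unital algebra, the operator
`F_s(x) = sx + xs` satisfies `F_s²(F_s² + 4·Id) = 0` and `tr F_s = 0`. -/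
theorem F_polynomial_identity_and_trace_zero
    {A : Type*} [Ring A] [Algebra ℝ A] [FiniteDimensional ℝ A]
    (s : A) (hs : s * s = -1) :
    ((LinearMap.mulLeft ℝ s + LinearMap.mulRight ℝ s) ∘ₗ
        (LinearMap.mulLeft ℝ s + LinearMap.mulRight ℝ s)) ∘ₗ
      (((LinearMap.mulLeft ℝ s + LinearMap.mulRight ℝ s) ∘ₗ
          (LinearMap.mulLeft ℝ s + LinearMap.mulRight ℝ s)) +
        (4 : ℝ) • LinearMap.id) = 0 ∧
    LinearMap.trace ℝ A (LinearMap.mulLeft ℝ s + LinearMap.mulRight ℝ s) = 0 := by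
  have hL : LinearMap.mulLeft ℝ s * LinearMap.mulLeft ℝ s = -1 := by
    ext x; simp [← mul_assoc, hs]
  have hR : LinearMap.mulRight ℝ s * LinearMap.mulRight ℝ s = -1 := by
    ext x; simp [mul_assoc, hs]
  have h4 : (4 : ℝ) • LinearMap.id = (4 : Module.End ℝ A) := by
    rw [← Module.End.one_eq_id, ← Algebra.algebraMap_eq_smul_one, map_ofNat]
  refine ⟨?_, ?_⟩
  · rw [h4, ← Module.End.mul_eq_comp, ← Module.End.mul_eq_comp]
    exact (LinearMap.commute_mulLeft_right s s).add_mul_self_mul_add_mul_self_add_four_eq_zero hL hR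
  · rw [map_add, LinearMap.trace_eq_zero_of_mul_self_eq_neg_one hL,
      LinearMap.trace_eq_zero_of_mul_self_eq_neg_one hR, add_zero]
end

section
/- Let A be a finite-dimensional real inner product space with an associative unital algebra structure, and let x ∈ A satisfy L_x + L_xᵗ = 2β·Id and L_xᵗ L_x = α²·Id for real numbers α, β with α² ≥ β². Then either x is a real multiple of 1 (when α² = β²), or x = β·1 + γ·s for some s with s² = -1, L_s orthogonal and antisymmetric, where γ = √(α² - β²) > 0. -/
/-!
Put `n = x - β·1`. The trace condition says exactly that `L_n = L_x - β` is skew-adjoint, and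
evaluating the norm condition at `1` gives `x² = 2βx - α²`, i.e. `n² = -(α² - β²)`. If
`α² = β²`, then `B(n, n) = B(L_n 1, n) = -B(1, n²) = 0`, so `n = 0`. Otherwise `s = n / γ` is
skew-adjoint with `s² = -1`, so `L_s L_sᵗ = -L_{s²} = Id`.
-/

section PositiveForm

variable {R M : Type*} [CommRing R] [PartialOrder R] [AddCommGroup M] [Module R M]
  {B : M →ₗ[R] M →ₗ[R] R}

theorem eq_zero_of_apply_self_eq_zero (hpos : ∀ x : M, x ≠ 0 → 0 < B x x) {v : M}
    (hv : B v v = 0) : v = 0 := by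
  by_contra hne
  exact (hpos v hne).ne' hv

theorem LinearMap.IsAdjointPair.right_unique (hpos : ∀ x : M, x ≠ 0 → 0 < B x x)
    {f g₁ g₂ : M → M} (h₁ : LinearMap.IsAdjointPair B B f g₁)
    (h₂ : LinearMap.IsAdjointPair B B f g₂) : g₁ = g₂ := by
  funext w
  refine sub_eq_zero.mp (eq_zero_of_apply_self_eq_zero hpos ?_)
  rw [map_sub, ← h₁, ← h₂, sub_self]

end PositiveForm

section Algebra

variable {R A : Type*} [CommRing R] [Ring A] [Algebra R A] {B : A →ₗ[R] A →ₗ[R] R}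

theorem isSkewAdjoint_mulLeft_sub_smul_one {x : A} {β : R} {adjLx : A →ₗ[R] A}
    (hadj : LinearMap.IsAdjointPair B B (LinearMap.mulLeft R x) adjLx)
    (htr : LinearMap.mulLeft R x + adjLx = (2 * β) • LinearMap.id) :
    B.IsSkewAdjoint (LinearMap.mulLeft R (x - β • 1)) := by
  have hadjLx : ∀ w, adjLx w = (2 * β) • w - x * w := fun w ↦ by
    rw [eq_sub_iff_add_eq', ← LinearMap.mulLeft_apply (R := R), ← LinearMap.add_apply, htr,
      LinearMap.smul_apply, LinearMap.id_apply]
  intro z w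
  simp only [LinearMap.mulLeft_apply, Pi.neg_apply, sub_mul, smul_mul_assoc, one_mul, map_sub,
    map_smul, LinearMap.sub_apply, LinearMap.smul_apply, map_neg]
  rw [← LinearMap.mulLeft_apply (R := R), hadj, hadjLx, map_sub, map_smul, smul_eq_mul,
    smul_eq_mul]
  ring

theorem mul_self_sub_smul_one {x : A} {α β : R} {adjLx : A →ₗ[R] A}
    (htr : LinearMap.mulLeft R x + adjLx = (2 * β) • LinearMap.id)
    (hnorm : adjLx ∘ₗ LinearMap.mulLeft R x = (α ^ 2) • LinearMap.id) :
    (x - β • 1) * (x - β • 1) = (β ^ 2 - α ^ 2) • (1 : A) := by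
  have htr_x := congr($htr x)
  have hnorm_one := congr($hnorm 1)
  simp only [LinearMap.add_apply, LinearMap.comp_apply, LinearMap.smul_apply,
    LinearMap.id_apply, LinearMap.mulLeft_apply, mul_one] at htr_x hnorm_one
  have hxx : x * x = (2 * β) • x - (α ^ 2) • (1 : A) := by
    rw [← hnorm_one]
    linear_combination (norm := module) htr_x
  simp only [sub_mul, mul_sub, smul_mul_assoc, mul_smul_comm, one_mul, mul_one, hxx]
  module

theorem isSkewAdjoint_mulLeft_smul {n : A} (hskew : B.IsSkewAdjoint (LinearMap.mulLeft R n))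
    (c : R) : B.IsSkewAdjoint (LinearMap.mulLeft R (c • n)) := by
  have : ⇑(LinearMap.mulLeft R (c • n)) = c • ⇑(LinearMap.mulLeft R n) := by
    funext z
    simp only [LinearMap.mulLeft_apply, smul_mul_assoc, Pi.smul_apply]
  rw [LinearMap.IsSkewAdjoint, this, ← smul_neg]
  exact hskew.smul c

theorem eq_zero_of_isSkewAdjoint_mulLeft_of_mul_self_eq_zero [PartialOrder R]
    (hpos : ∀ x : A, x ≠ 0 → 0 < B x x) {n : A} (hskew : B.IsSkewAdjoint (LinearMap.mulLeft R n))
    (hn : n * n = 0) : n = 0 := by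
  refine eq_zero_of_apply_self_eq_zero hpos ?_
  simpa only [LinearMap.mulLeft_apply, mul_one, Pi.neg_apply, hn, neg_zero, map_zero]
    using hskew 1 n

end Algebra

theorem quadratic_cone_characterization_general
    {A : Type*} [Ring A] [Algebra ℝ A]
    (B : A →ₗ[ℝ] A →ₗ[ℝ] ℝ)
    (hpos : ∀ x : A, x ≠ 0 → 0 < B x x)
    (adj : (A →ₗ[ℝ] A) → (A →ₗ[ℝ] A))
    (hadj : ∀ (f : A →ₗ[ℝ] A) (x y : A), B (f x) y = B x (adj f y))
    (x : A) (α β : ℝ) (hαβ : β ^ 2 ≤ α ^ 2)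
    (htr : LinearMap.mulLeft ℝ x + adj (LinearMap.mulLeft ℝ x) = (2 * β) • LinearMap.id)
    (hnorm : adj (LinearMap.mulLeft ℝ x) ∘ₗ LinearMap.mulLeft ℝ x = (α ^ 2) • LinearMap.id) :
    (α ^ 2 = β ^ 2 ∧ x = β • (1 : A)) ∨
    (β ^ 2 < α ^ 2 ∧ ∃ s : A, s * s = -1 ∧
      LinearMap.mulLeft ℝ s ∘ₗ adj (LinearMap.mulLeft ℝ s) = LinearMap.id ∧
      LinearMap.mulLeft ℝ s + adj (LinearMap.mulLeft ℝ s) = 0 ∧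
      x = β • (1 : A) + Real.sqrt (α ^ 2 - β ^ 2) • s) := by
  have hskew := isSkewAdjoint_mulLeft_sub_smul_one (hadj _) htr
  have hsq := mul_self_sub_smul_one htr hnorm
  rcases hαβ.eq_or_lt with heq | hlt
  · refine .inl ⟨heq.symm, sub_eq_zero.mp ?_⟩
    exact eq_zero_of_isSkewAdjoint_mulLeft_of_mul_self_eq_zero hpos hskew
      (by rw [hsq, heq, sub_self, zero_smul])
  set γ := Real.sqrt (α ^ 2 - β ^ 2)
  have hγ : γ ^ 2 = α ^ 2 - β ^ 2 := Real.sq_sqrt (sub_nonneg.mpr hαβ)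
  have hγ0 : γ ≠ 0 := (Real.sqrt_pos.mpr (sub_pos.mpr hlt)).ne'
  set s := γ⁻¹ • (x - β • 1)
  have hss : s * s = -1 := by
    rw [smul_mul_smul_comm, hsq, smul_smul, ← neg_sub, ← hγ, mul_neg, ← sq, ← mul_pow,
      inv_mul_cancel₀ hγ0, one_pow, neg_one_smul]
  have hadj_s : adj (LinearMap.mulLeft ℝ s) = -LinearMap.mulLeft ℝ s := by
    ext z
    exact congr_fun (LinearMap.IsAdjointPair.right_unique hpos (hadj (LinearMap.mulLeft ℝ s))
      (isSkewAdjoint_mulLeft_smul hskew γ⁻¹)) z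
  refine .inr ⟨hlt, s, hss, ?_, by rw [hadj_s, add_neg_cancel], ?_⟩
  · ext z
    simp [hadj_s, ← mul_assoc, hss]
  · rw [smul_smul, mul_inv_cancel₀ hγ0, one_smul, add_sub_cancel]

/-- If `L_x + L_xᵗ = 2β·Id` and `L_xᵗ L_x = α²·Id` with `α² ≥ β²`, then either `α² = β²` and
`x = β·1`, or `α² > β²` and `x = β·1 + γ·s` where `γ = √(α² - β²)` and `s` is a square root
of `-1` with `L_s` orthogonal and antisymmetric. -/
theorem quadratic_cone_characterization
    {A : Type*} [Ring A] [Algebra ℝ A] [FiniteDimensional ℝ A]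
    (B : A →ₗ[ℝ] A →ₗ[ℝ] ℝ)
    (hsymm : ∀ x y : A, B x y = B y x)
    (hpos : ∀ x : A, x ≠ 0 → 0 < B x x)
    (adj : (A →ₗ[ℝ] A) → (A →ₗ[ℝ] A))
    (hadj : ∀ (f : A →ₗ[ℝ] A) (x y : A), B (f x) y = B x (adj f y))
    (x : A) (α β : ℝ) (hαβ : β ^ 2 ≤ α ^ 2)
    (htr : LinearMap.mulLeft ℝ x + adj (LinearMap.mulLeft ℝ x) = (2 * β) • LinearMap.id)
    (hnorm : adj (LinearMap.mulLeft ℝ x) ∘ₗ LinearMap.mulLeft ℝ x = (α ^ 2) • LinearMap.id) :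
    (α ^ 2 = β ^ 2 ∧ x = β • (1 : A)) ∨
    (β ^ 2 < α ^ 2 ∧ ∃ s : A, s * s = -1 ∧
      LinearMap.mulLeft ℝ s ∘ₗ adj (LinearMap.mulLeft ℝ s) = LinearMap.id ∧
      LinearMap.mulLeft ℝ s + adj (LinearMap.mulLeft ℝ s) = 0 ∧
      x = β • (1 : A) + Real.sqrt (α ^ 2 - β ^ 2) • s) :=
  quadratic_cone_characterization_general B hpos adj hadj x α β hαβ htr hnorm
end

section
/- Let A be a finite-dimensional real inner product space with an associative unital algebra structure, with complexified bilinear form Q on ℂ ⊗ A and quadratic form Φ(w) = Q(w,w). If w = 1⊗v + i⊗(sv) for some v ∈ A and some s with s² = -1, L_s orthogonal and antisymmetric, then Φ(ww') = 0 for all w' ∈ ℂ ⊗ A; equivalently, L_wᵗ L_w = 0 as an endomorphism of ℂ ⊗ A. -/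
/-!
Write `J = L_s`. Skew-adjointness together with `J² = -1` makes `J` an isometry, so `1 + iJ` maps
every vector of `ℂ ⊗ A` to a `Q`-isotropic one:
`Q((1 + iJ)z, (1 + iJ)z) = Q(z, z) - Q(Jz, Jz) + i (Q(Jz, z) + Q(z, Jz)) = 0`.
Since `w w' = (1 + iJ)(v w')`, this is the first claim. For the operator identities, the adjoint of
`L_{sv} = J L_v` is `-L_vᵗ J`, and `J² = -1` makes the two identities fall out.
-/

namespace LinearMap

variable {R M N : Type*} [CommRing R] [AddCommGroup M] [Module R M] [AddCommGroup N] [Module R N]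
  {B : M →ₗ[R] M →ₗ[R] N}

theorem separatingRight_of_pos [Preorder N] (hpos : ∀ x, x ≠ 0 → 0 < B x x) :
    B.SeparatingRight := fun y hy => by
  by_contra hne
  exact (hpos y hne).ne' (hy y)

theorem IsAdjointPair.eq_of_separatingRight (hB : B.SeparatingRight) {f g₁ g₂ : M →ₗ[R] M}
    (h₁ : IsAdjointPair B B f g₁) (h₂ : IsAdjointPair B B f g₂) : g₁ = g₂ :=
  ext fun y => sub_eq_zero.1 <| hB _ fun x => by rw [map_sub, ← h₁, ← h₂, sub_self]

section SkewInvolution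

variable {J : M →ₗ[R] M} (hJ : IsSkewAdjoint B J) (hJJ : ∀ x, J (J x) = -x)
include hJ hJJ

theorem IsSkewAdjoint.isotropic_of_sq_eq_neg_one (p q : M) :
    B (p - J q) (p - J q) = B (q + J p) (q + J p) ∧
      B (p - J q) (q + J p) + B (q + J p) (p - J q) = 0 := by
  have skew (x y : M) : B (J x) y = -B x (J y) := by
    rw [hJ x y, Pi.neg_apply, map_neg]
  simp only [map_sub, map_add, sub_apply, add_apply, skew, hJJ, map_neg]
  constructor <;> abel

theorem IsSkewAdjoint.adjoint_comp_isotropic_of_sq_eq_neg_one (hB : B.SeparatingRight)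
    {f f' g' : M →ₗ[R] M} (hf : IsAdjointPair B B f f') (hg : IsAdjointPair B B (J ∘ₗ f) g') :
    f' ∘ₗ f = g' ∘ₗ (J ∘ₗ f) ∧ f' ∘ₗ (J ∘ₗ f) + g' ∘ₗ f = 0 := by
  have hg' : g' = f' ∘ₗ (-J) := hg.eq_of_separatingRight hB (hf.comp hJ)
  subst hg'
  constructor <;> ext x <;> simp [hJJ]

end SkewInvolution

end LinearMap

open LinearMap in
theorem zero_variety_quadratic_equations_general
    {A : Type*} [Ring A] [Algebra ℝ A]
    (B : A →ₗ[ℝ] A →ₗ[ℝ] ℝ)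
    (hpos : ∀ x : A, x ≠ 0 → 0 < B x x)
    (adj : (A →ₗ[ℝ] A) → (A →ₗ[ℝ] A))
    (hadj : ∀ (f : A →ₗ[ℝ] A) (x y : A), B (f x) y = B x (adj f y))
    (s : A) (hs : s * s = -1)
    (hanti : LinearMap.mulLeft ℝ s + adj (LinearMap.mulLeft ℝ s) = 0)
    (v : A) :
    (∀ c d : A,
      ((B (v * c - (s * v) * d) (v * c - (s * v) * d)
          - B (v * d + (s * v) * c) (v * d + (s * v) * c) : ℝ) : ℂ)
        + ((B (v * c - (s * v) * d) (v * d + (s * v) * c)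
            + B (v * d + (s * v) * c) (v * c - (s * v) * d) : ℝ) : ℂ) * Complex.I = 0) ∧
    adj (LinearMap.mulLeft ℝ v) ∘ₗ LinearMap.mulLeft ℝ v =
      adj (LinearMap.mulLeft ℝ (s * v)) ∘ₗ LinearMap.mulLeft ℝ (s * v) ∧
    adj (LinearMap.mulLeft ℝ v) ∘ₗ LinearMap.mulLeft ℝ (s * v) +
      adj (LinearMap.mulLeft ℝ (s * v)) ∘ₗ LinearMap.mulLeft ℝ v = 0 := by
  have hJ : IsSkewAdjoint B (mulLeft ℝ s) := fun x y => by
    rw [hadj, eq_neg_of_add_eq_zero_right hanti]; rfl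
  have hJJ (x : A) : s * (s * x) = -x := by rw [← mul_assoc, hs, neg_one_mul]
  refine ⟨fun c d => ?_, ?_⟩
  · obtain ⟨hre, him⟩ := hJ.isotropic_of_sq_eq_neg_one hJJ (v * c) (v * d)
    simp only [mulLeft_apply] at hre him
    simp only [mul_assoc s v, sub_eq_zero.2 hre, him, Complex.ofReal_zero, zero_mul, add_zero]
  · rw [mulLeft_mul]
    exact hJ.adjoint_comp_isotropic_of_sq_eq_neg_one hJJ (separatingRight_of_pos hpos)
      (hadj _) (hadj _)

/-- Identify `ℂ ⊗ A` with `A × A` (`1⊗x + i⊗y ↦ (x,y)`), with product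
`(a,b)(c,d) = (ac - bd, ad + bc)` and `Q` the `ℂ`-bilinear extension of the inner product `B`,
`Φ(w) = Q(w,w)`. If `w = 1⊗v + i⊗(sv)` for some `v` and some `s` with `s² = -1`, `L_s`
orthogonal and antisymmetric, then `Φ(ww') = 0` for all `w' = (c,d)`; equivalently,
`L_vᵗ L_v = L_{sv}ᵗ L_{sv}` and `L_vᵗ L_{sv} + L_{sv}ᵗ L_v = 0`. -/
theorem zero_variety_quadratic_equations
    {A : Type*} [Ring A] [Algebra ℝ A] [FiniteDimensional ℝ A]
    (B : A →ₗ[ℝ] A →ₗ[ℝ] ℝ)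
    (hsymm : ∀ x y : A, B x y = B y x)
    (hpos : ∀ x : A, x ≠ 0 → 0 < B x x)
    (adj : (A →ₗ[ℝ] A) → (A →ₗ[ℝ] A))
    (hadj : ∀ (f : A →ₗ[ℝ] A) (x y : A), B (f x) y = B x (adj f y))
    (s : A) (hs : s * s = -1)
    (horth : LinearMap.mulLeft ℝ s ∘ₗ adj (LinearMap.mulLeft ℝ s) = LinearMap.id)
    (hanti : LinearMap.mulLeft ℝ s + adj (LinearMap.mulLeft ℝ s) = 0)
    (v : A) :
    (∀ c d : A,
      ((B (v * c - (s * v) * d) (v * c - (s * v) * d)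
          - B (v * d + (s * v) * c) (v * d + (s * v) * c) : ℝ) : ℂ)
        + ((B (v * c - (s * v) * d) (v * d + (s * v) * c)
            + B (v * d + (s * v) * c) (v * c - (s * v) * d) : ℝ) : ℂ) * Complex.I = 0) ∧
    adj (LinearMap.mulLeft ℝ v) ∘ₗ LinearMap.mulLeft ℝ v =
      adj (LinearMap.mulLeft ℝ (s * v)) ∘ₗ LinearMap.mulLeft ℝ (s * v) ∧
    adj (LinearMap.mulLeft ℝ v) ∘ₗ LinearMap.mulLeft ℝ (s * v) +
      adj (LinearMap.mulLeft ℝ (s * v)) ∘ₗ LinearMap.mulLeft ℝ v = 0 :=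
  zero_variety_quadratic_equations_general B hpos adj hadj s hs hanti v
end

section
/- Let A be a finite-dimensional real inner product space with an associative unital algebra structure. Let a, b ∈ A with a invertible, and suppose L_aᵗL_a = L_bᵗL_b and L_aᵗL_b + L_bᵗL_a = 0. Then b is invertible, and u = b a⁻¹ satisfies L_uᵗL_u = Id, L_u + L_uᵗ = 0 (hence u² = -1), and L_b = L_u L_a. -/
/-!
Both hypotheses are identities between the forms `(s, t) ↦ B (x s) (y t)` for `x, y ∈ {a, b}`:
left multiplication by `b` has the same "length" as that by `a`, hence is injective and so, `A`
being finite-dimensional, `b` is a unit. Substituting `s ↦ a⁻¹ s` turns them into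
`B (u s) (u t) = B s t` and `B s (u t) = -B (u s) t` for `u = b a⁻¹`, which by positivity of `B`
are the operator identities `L_uᵗ L_u = 1` and `L_uᵗ = -L_u`; together they give `u² = -1`.
-/

open LinearMap (mulLeft mulLeft_apply comp_apply id_apply comp_id)

section Adjoint

variable {V : Type*} [AddCommGroup V] [Module ℝ V] {B : V →ₗ[ℝ] V →ₗ[ℝ] ℝ}
  {adj : (V →ₗ[ℝ] V) → (V →ₗ[ℝ] V)}

theorem eq_of_forall_apply_eq_of_pos (hpos : ∀ x : V, x ≠ 0 → 0 < B x x) {z w : V}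
    (h : ∀ x, B x z = B x w) : z = w := by
  by_contra hne
  have hzero : B (z - w) (z - w) = 0 := by rw [map_sub, h, sub_self]
  exact (hpos _ (sub_ne_zero.mpr hne)).ne' hzero

theorem injective_of_apply_self_eq (hpos : ∀ x : V, x ≠ 0 → 0 < B x x) {f g : V →ₗ[ℝ] V}
    (hg : Function.Injective g) (h : ∀ x, B (f x) (f x) = B (g x) (g x)) :
    Function.Injective f := by
  refine (injective_iff_map_eq_zero f).mpr fun x hx => hg ?_
  by_contra hne
  have hgx := hpos _ (by rwa [map_zero] at hne)
  rw [← h, hx, map_zero] at hgx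
  exact lt_irrefl _ hgx

theorem apply_eq_apply_of_adj_comp_eq
    (hadj : ∀ (f : V →ₗ[ℝ] V) (x y : V), B (f x) y = B x (adj f y))
    {f f' g g' : V →ₗ[ℝ] V} (h : adj f ∘ₗ f' = adj g ∘ₗ g') (s t : V) :
    B (f s) (f' t) = B (g s) (g' t) := by
  rw [hadj, hadj, ← comp_apply (adj f), h, comp_apply]

theorem apply_add_apply_eq_zero_of_adj_comp_add_eq_zero
    (hadj : ∀ (f : V →ₗ[ℝ] V) (x y : V), B (f x) y = B x (adj f y))
    {f f' g g' : V →ₗ[ℝ] V} (h : adj f ∘ₗ f' + adj g ∘ₗ g' = 0) (s t : V) :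
    B (f s) (f' t) + B (g s) (g' t) = 0 := by
  rw [hadj, hadj, ← map_add, ← comp_apply (adj f), ← comp_apply (adj g), ← LinearMap.add_apply,
    h, LinearMap.zero_apply, map_zero]

theorem adj_comp_eq_of_forall_apply_eq
    (hadj : ∀ (f : V →ₗ[ℝ] V) (x y : V), B (f x) y = B x (adj f y))
    (hpos : ∀ x : V, x ≠ 0 → 0 < B x x) {f g h : V →ₗ[ℝ] V}
    (H : ∀ s t, B (f s) (g t) = B s (h t)) : adj f ∘ₗ g = h :=
  LinearMap.ext fun t => eq_of_forall_apply_eq_of_pos hpos fun s => by rw [comp_apply, ← hadj, H]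

end Adjoint

theorem isUnit_of_mulLeft_injective {A : Type*} [Ring A] [Algebra ℝ A] [FiniteDimensional ℝ A]
    {b : A} (h : Function.Injective (mulLeft ℝ b)) : IsUnit b :=
  IsUnit.isUnit_iff_mulLeft_bijective.mpr ⟨h, LinearMap.injective_iff_surjective.mp h⟩

theorem zero_variety_unit_factorization_general
    {A : Type*} [Ring A] [Algebra ℝ A] [FiniteDimensional ℝ A]
    (B : A →ₗ[ℝ] A →ₗ[ℝ] ℝ)
    (hpos : ∀ x : A, x ≠ 0 → 0 < B x x)
    (adj : (A →ₗ[ℝ] A) → (A →ₗ[ℝ] A))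
    (hadj : ∀ (f : A →ₗ[ℝ] A) (x y : A), B (f x) y = B x (adj f y))
    (a b : A) (ha : IsUnit a)
    (h1 : adj (LinearMap.mulLeft ℝ a) ∘ₗ LinearMap.mulLeft ℝ a =
      adj (LinearMap.mulLeft ℝ b) ∘ₗ LinearMap.mulLeft ℝ b)
    (h2 : adj (LinearMap.mulLeft ℝ a) ∘ₗ LinearMap.mulLeft ℝ b +
      adj (LinearMap.mulLeft ℝ b) ∘ₗ LinearMap.mulLeft ℝ a = 0) :
    IsUnit b ∧
    ∀ a' : A, a * a' = 1 → a' * a = 1 →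
      adj (LinearMap.mulLeft ℝ (b * a')) ∘ₗ LinearMap.mulLeft ℝ (b * a') = LinearMap.id ∧
      LinearMap.mulLeft ℝ (b * a') + adj (LinearMap.mulLeft ℝ (b * a')) = 0 ∧
      (b * a') * (b * a') = -1 ∧
      LinearMap.mulLeft ℝ b = LinearMap.mulLeft ℝ (b * a') ∘ₗ LinearMap.mulLeft ℝ a := by
  have hlen : ∀ s t, B (a * s) (a * t) = B (b * s) (b * t) :=
    apply_eq_apply_of_adj_comp_eq hadj h1
  have hskew : ∀ s t, B (a * s) (b * t) + B (b * s) (a * t) = 0 :=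
    apply_add_apply_eq_zero_of_adj_comp_add_eq_zero hadj h2
  refine ⟨isUnit_of_mulLeft_injective <| injective_of_apply_self_eq hpos (g := mulLeft ℝ a)
    ha.mul_right_injective fun x => (hlen x x).symm, fun a' haa' ha'a => ?_⟩
  have ha_cancel (x : A) : a * (a' * x) = x := by rw [← mul_assoc, haa', one_mul]
  have hisom : adj (mulLeft ℝ (b * a')) ∘ₗ mulLeft ℝ (b * a') = LinearMap.id :=
    adj_comp_eq_of_forall_apply_eq hadj hpos fun s t => by
      simpa [mul_assoc, ha_cancel] using (hlen (a' * s) (a' * t)).symm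
  have hadj_eq : adj (mulLeft ℝ (b * a')) = -mulLeft ℝ (b * a') := by
    rw [← comp_id (adj _)]
    refine adj_comp_eq_of_forall_apply_eq hadj hpos fun s t => ?_
    have h := hskew (a' * s) (a' * t)
    simp only [ha_cancel, ← mul_assoc] at h
    simp only [mulLeft_apply, id_apply, LinearMap.neg_apply, map_neg]
    linarith
  refine ⟨hisom, by rw [hadj_eq, add_neg_cancel], ?_, ?_⟩
  · have h := LinearMap.congr_fun hisom 1
    rw [hadj_eq] at h
    simpa only [comp_apply, LinearMap.neg_apply, mulLeft_apply, mul_one, id_apply,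
      neg_eq_iff_eq_neg] using h
  · ext x
    simp [← mul_assoc a', ha'a]

/-- Let `a, b ∈ A` with `a` invertible, `L_aᵗ L_a = L_bᵗ L_b` and `L_aᵗ L_b + L_bᵗ L_a = 0`.
Then `b` is invertible and `u = b a⁻¹` satisfies `L_uᵗ L_u = Id`, `L_u + L_uᵗ = 0`
(hence `u² = -1`), and `L_b = L_u L_a`. -/
theorem zero_variety_unit_factorization
    {A : Type*} [Ring A] [Algebra ℝ A] [FiniteDimensional ℝ A]
    (B : A →ₗ[ℝ] A →ₗ[ℝ] ℝ)
    (hsymm : ∀ x y : A, B x y = B y x)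
    (hpos : ∀ x : A, x ≠ 0 → 0 < B x x)
    (adj : (A →ₗ[ℝ] A) → (A →ₗ[ℝ] A))
    (hadj : ∀ (f : A →ₗ[ℝ] A) (x y : A), B (f x) y = B x (adj f y))
    (a b : A) (ha : IsUnit a)
    (h1 : adj (LinearMap.mulLeft ℝ a) ∘ₗ LinearMap.mulLeft ℝ a =
      adj (LinearMap.mulLeft ℝ b) ∘ₗ LinearMap.mulLeft ℝ b)
    (h2 : adj (LinearMap.mulLeft ℝ a) ∘ₗ LinearMap.mulLeft ℝ b +
      adj (LinearMap.mulLeft ℝ b) ∘ₗ LinearMap.mulLeft ℝ a = 0) :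
    IsUnit b ∧
    ∀ a' : A, a * a' = 1 → a' * a = 1 →
      adj (LinearMap.mulLeft ℝ (b * a')) ∘ₗ LinearMap.mulLeft ℝ (b * a') = LinearMap.id ∧
      LinearMap.mulLeft ℝ (b * a') + adj (LinearMap.mulLeft ℝ (b * a')) = 0 ∧
      (b * a') * (b * a') = -1 ∧
      LinearMap.mulLeft ℝ b = LinearMap.mulLeft ℝ (b * a') ∘ₗ LinearMap.mulLeft ℝ a :=
  zero_variety_unit_factorization_general B hpos adj hadj a b ha h1 h2
end
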